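/- Let 0 < δ < 1/2, κ > 0, C ≥ 0, L > 0 and M ≥ 1. Suppose Ω, r, φ satisfy on Q equations (N1), (N2), (N3) and the axis normalization, together with: |g(y)| ≤ L|y| for all y ∈ ℝ; 1/M ≤ Ω ≤ M, ϱ/M ≤ r ≤ Mϱ and 1/4 ≤ ∂_ū r ≤ M on Q; and the bootstrap bound |∂_ū φ| ≤ C r^{δ−1} on Q∖Γ. Then there exists C′ > 0, depending only on δ, κ, L, M, such that on Q∖Γ: |φ| ≤ C′ C r^{δ}, |∂_u r + 1/2| ≤ C′ C² r^{2δ}, |∂_ū r − 1/2| ≤ C′ C² r^{2δ}, |r − ϱ| ≤ C′ C² r^{2δ} ϱ, and |Ω − 1| ≤ C′ C² r^{2δ}. -/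

import Mathlib

open Real

/-- Partial derivative in the null variable `u`. -/
noncomputable def pdu (f : ℝ → ℝ → ℝ) (u v : ℝ) : ℝ := deriv (fun u' => f u' v) u

/-- Partial derivative in the null variable `ū`. -/
noncomputable def pdub (f : ℝ → ℝ → ℝ) (u v : ℝ) : ℝ := deriv (fun v' => f u v') v

/-- The rescaled double-null domain `Q = {(u,ū) : −2 ≤ u ≤ ū ≤ 0}`. -/
def Qset : Set (ℝ × ℝ) := {p | -2 ≤ p.1 ∧ p.1 ≤ p.2 ∧ p.2 ≤ 0}

/-- `ϱ = (ū − u)/2`. -/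
noncomputable def vrho (p : ℝ × ℝ) : ℝ := (p.2 - p.1) / 2

/-- The axis normalization `r = 0`, `∂_ū r = 1/2`, `∂_u r = −1/2`, `Ω = 1`, `φ = 0` on
the axis `Γ = {u = ū}` (inside `Q`). -/
def AxisNormalized (Ω r φ : ℝ → ℝ → ℝ) : Prop :=
  ∀ u ∈ Set.Icc (-2 : ℝ) 0,
    r u u = 0 ∧ pdub r u u = 1 / 2 ∧ pdu r u u = -(1 / 2) ∧ Ω u u = 1 ∧ φ u u = 0

/-- `Ω`, `r`, `φ` are `Cⁿ` on a neighborhood of `Q`. -/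
def SmoothNearQ (n : ℕ) (Ω r φ : ℝ → ℝ → ℝ) : Prop :=
  ∃ V : Set (ℝ × ℝ), IsOpen V ∧ Qset ⊆ V ∧
    ContDiffOn ℝ n (fun p : ℝ × ℝ => Ω p.1 p.2) V ∧
    ContDiffOn ℝ n (fun p : ℝ × ℝ => r p.1 p.2) V ∧
    ContDiffOn ℝ n (fun p : ℝ × ℝ => φ p.1 p.2) V

/-- Equation (N1): `∂_u(Ω^{−2} ∂_u r) = −Ω^{−2} κ r (∂_u φ)²`. -/
def EqN1 (κ : ℝ) (Ω r φ : ℝ → ℝ → ℝ) (u v : ℝ) : Prop :=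
  pdu (fun u' v' => ((Ω u' v') ^ 2)⁻¹ * pdu r u' v') u v
    = -(((Ω u v) ^ 2)⁻¹ * κ * r u v * (pdu φ u v) ^ 2)

/-- Equation (N2): `∂_ū(Ω^{−2} ∂_ū r) = −Ω^{−2} κ r (∂_ū φ)²`. -/
def EqN2 (κ : ℝ) (Ω r φ : ℝ → ℝ → ℝ) (u v : ℝ) : Prop :=
  pdub (fun u' v' => ((Ω u' v') ^ 2)⁻¹ * pdub r u' v') u v
    = -(((Ω u v) ^ 2)⁻¹ * κ * r u v * (pdub φ u v) ^ 2)

/-- Equation (N3): `∂_u ∂_ū r = κ Ω² g(φ)² / (4r)`. -/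
def EqN3 (κ : ℝ) (g : ℝ → ℝ) (Ω r φ : ℝ → ℝ → ℝ) (u v : ℝ) : Prop :=
  pdu (pdub r) u v = κ * (Ω u v) ^ 2 * (g (φ u v)) ^ 2 / (4 * r u v)

/-- Equation (N4): `∂_u(r ∂_ū φ) + ∂_ū(r ∂_u φ) = −Ω² g(φ)g′(φ)/(2r)`. -/
def EqN4 (g : ℝ → ℝ) (Ω r φ : ℝ → ℝ → ℝ) (u v : ℝ) : Prop :=
  pdu (fun u' v' => r u' v' * pdub φ u' v') u v
      + pdub (fun u' v' => r u' v' * pdu φ u' v') u v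
    = -((Ω u v) ^ 2 * g (φ u v) * deriv g (φ u v) / (2 * r u v))

/-- Equation (N5): `∂_u ∂_ū (log Ω) = −(κ/2) ∂_u φ ∂_ū φ − (κΩ²/8) g(φ)²/r²`. -/
def EqN5 (κ : ℝ) (g : ℝ → ℝ) (Ω r φ : ℝ → ℝ → ℝ) (u v : ℝ) : Prop :=
  pdu (pdub (fun u' v' => Real.log (Ω u' v'))) u v
    = -((κ / 2) * pdu φ u v * pdub φ u v)
      - (κ * (Ω u v) ^ 2 / 8) * (g (φ u v)) ^ 2 / (r u v) ^ 2


/-!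
Every estimate comes from integrating one of the equations along a null segment with one end on
the axis, where the normalization fixes the value. As `r` is comparable to `ϱ`, the bootstrap
bound `|∂_ū φ| ≤ C r^{δ-1}` is integrable and gives `|φ| ≲ C r^δ`. Then the right-hand side of
(N3) is `O(C² r^{2δ-1})`; integrating it in `u`, resp. in `ū` after exchanging the mixed
partials, bounds `∂_ū r - 1/2` and `∂_u r + 1/2` by `O(C² r^{2δ})`, and the mean value theorem
turns the first bound into one on `r - ϱ`. Finally (N2) integrated in `ū` bounds
`Ω⁻² ∂_ū r - 1/2`, which together with `∂_ū r ≥ 1/4` controls `Ω - 1`.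
-/

open Function Set Topology

section PartialDerivatives

variable {F : ℝ → ℝ → ℝ} {a b : ℝ}

theorem hasDerivAt_fderiv_apply_zero_one (h : DifferentiableAt ℝ (uncurry F) (a, b)) :
    HasDerivAt (F a) (fderiv ℝ (uncurry F) (a, b) (0, 1)) b :=
  h.hasFDerivAt.comp_hasDerivAt b ((hasDerivAt_const b a).prodMk (hasDerivAt_id' b))

theorem hasDerivAt_fderiv_apply_one_zero (h : DifferentiableAt ℝ (uncurry F) (a, b)) :
    HasDerivAt (fun x => F x b) (fderiv ℝ (uncurry F) (a, b) (1, 0)) a :=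
  h.hasFDerivAt.comp_hasDerivAt (l := uncurry F) a
    ((hasDerivAt_id' a).prodMk (hasDerivAt_const a b))

theorem pdub_eq_fderiv (h : DifferentiableAt ℝ (uncurry F) (a, b)) :
    pdub F a b = fderiv ℝ (uncurry F) (a, b) (0, 1) :=
  (hasDerivAt_fderiv_apply_zero_one h).deriv

theorem pdu_eq_fderiv (h : DifferentiableAt ℝ (uncurry F) (a, b)) :
    pdu F a b = fderiv ℝ (uncurry F) (a, b) (1, 0) :=
  (hasDerivAt_fderiv_apply_one_zero h).deriv

theorem hasDerivAt_pdub (h : ContDiffAt ℝ 1 (uncurry F) (a, b)) :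
    HasDerivAt (F a) (pdub F a b) b :=
  (hasDerivAt_fderiv_apply_zero_one (h.differentiableAt one_ne_zero)).differentiableAt.hasDerivAt

theorem hasDerivAt_pdu (h : ContDiffAt ℝ 1 (uncurry F) (a, b)) :
    HasDerivAt (fun x => F x b) (pdu F a b) a :=
  (hasDerivAt_fderiv_apply_one_zero (h.differentiableAt one_ne_zero)).differentiableAt.hasDerivAt

theorem uncurry_pdub_eventuallyEq (h : ContDiffAt ℝ 1 (uncurry F) (a, b)) :
    uncurry (pdub F) =ᶠ[𝓝 (a, b)] fun p => fderiv ℝ (uncurry F) p (0, 1) := by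
  filter_upwards [h.eventually (by simp)] with p hp
  exact pdub_eq_fderiv (hp.differentiableAt one_ne_zero)

theorem uncurry_pdu_eventuallyEq (h : ContDiffAt ℝ 1 (uncurry F) (a, b)) :
    uncurry (pdu F) =ᶠ[𝓝 (a, b)] fun p => fderiv ℝ (uncurry F) p (1, 0) := by
  filter_upwards [h.eventually (by simp)] with p hp
  exact pdu_eq_fderiv (hp.differentiableAt one_ne_zero)

theorem contDiffAt_uncurry_pdub {n : ℕ} (h : ContDiffAt ℝ (n + 1) (uncurry F) (a, b)) :
    ContDiffAt ℝ n (uncurry (pdub F)) (a, b) := by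
  refine ContDiffAt.congr_of_eventuallyEq ?_
    (uncurry_pdub_eventuallyEq (h.of_le (by simp)))
  exact (h.fderiv_right le_rfl).clm_apply contDiffAt_const

theorem contDiffAt_uncurry_pdu {n : ℕ} (h : ContDiffAt ℝ (n + 1) (uncurry F) (a, b)) :
    ContDiffAt ℝ n (uncurry (pdu F)) (a, b) := by
  refine ContDiffAt.congr_of_eventuallyEq ?_
    (uncurry_pdu_eventuallyEq (h.of_le (by simp)))
  exact (h.fderiv_right le_rfl).clm_apply contDiffAt_const

theorem pdub_pdu_eq_pdu_pdub (h : ContDiffAt ℝ 2 (uncurry F) (a, b)) :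
    pdub (pdu F) a b = pdu (pdub F) a b := by
  have h1 : ContDiffAt ℝ 1 (uncurry F) (a, b) := h.of_le (by norm_num)
  have h2 : ContDiffAt ℝ (1 + 1) (uncurry F) (a, b) := h
  have hD : DifferentiableAt ℝ (fderiv ℝ (uncurry F)) (a, b) :=
    (h.fderiv_right (m := 1) le_rfl).differentiableAt one_ne_zero
  rw [pdub_eq_fderiv ((contDiffAt_uncurry_pdu (n := 1) h2).differentiableAt one_ne_zero),
    pdu_eq_fderiv ((contDiffAt_uncurry_pdub (n := 1) h2).differentiableAt one_ne_zero),
    (uncurry_pdu_eventuallyEq h1).fderiv_eq, (uncurry_pdub_eventuallyEq h1).fderiv_eq,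
    fderiv_clm_apply hD (differentiableAt_const _), fderiv_clm_apply hD (differentiableAt_const _)]
  simpa using h.isSymmSndFDerivAt (by simp) (0, 1) (1, 0)

end PartialDerivatives

section PowerLawBounds

variable {f f' : ℝ → ℝ} {a b α K : ℝ}

/-- Cauchy's mean value theorem against `(s - a) ^ α`. -/
theorem abs_sub_le_of_abs_deriv_le_rpow_sub_left (hab : a < b) (hα : 0 < α)
    (hf : ContinuousOn f (Icc a b)) (hf' : ∀ s ∈ Ioo a b, HasDerivAt f (f' s) s)
    (hbound : ∀ s ∈ Ioo a b, |f' s| ≤ K * (s - a) ^ (α - 1)) :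
    |f b - f a| ≤ K / α * (b - a) ^ α := by
  have hg : ContinuousOn (fun s => (s - a) ^ α) (Icc a b) :=
    (continuousOn_id.sub continuousOn_const).rpow_const fun _ _ => Or.inr hα.le
  have hg' : ∀ s ∈ Ioo a b, HasDerivAt (fun s => (s - a) ^ α) (α * (s - a) ^ (α - 1)) s :=
    fun s hs => by
      simpa using ((hasDerivAt_id' s).sub_const a).rpow_const (p := α)
        (Or.inl (sub_ne_zero.2 hs.1.ne'))
  obtain ⟨c, hc, hcauchy⟩ := exists_ratio_hasDerivAt_eq_ratio_slope f f' hab hf hf' _ _ hg hg'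
  rw [sub_self, zero_rpow hα.ne', sub_zero] at hcauchy
  have hpos : 0 < α * (c - a) ^ (α - 1) := mul_pos hα (rpow_pos_of_pos (sub_pos.2 hc.1) _)
  have hba : 0 ≤ (b - a) ^ α := rpow_nonneg (sub_pos.2 hab).le _
  refine le_of_mul_le_mul_right ?_ hpos
  calc |f b - f a| * (α * (c - a) ^ (α - 1)) = (b - a) ^ α * |f' c| := by
        rw [← abs_of_pos hpos, ← abs_mul, ← hcauchy, abs_mul, abs_of_nonneg hba]
    _ ≤ (b - a) ^ α * (K * (c - a) ^ (α - 1)) := mul_le_mul_of_nonneg_left (hbound c hc) hba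
    _ = K / α * (b - a) ^ α * (α * (c - a) ^ (α - 1)) := by field_simp

theorem abs_sub_le_of_abs_deriv_le_rpow_sub_right (hab : a < b) (hα : 0 < α)
    (hf : ContinuousOn f (Icc a b)) (hf' : ∀ s ∈ Ioo a b, HasDerivAt f (f' s) s)
    (hbound : ∀ s ∈ Ioo a b, |f' s| ≤ K * (b - s) ^ (α - 1)) :
    |f b - f a| ≤ K / α * (b - a) ^ α := by
  have hIcc : ∀ s ∈ Icc a b, a + b - s ∈ Icc a b := fun s hs =>
    ⟨by linarith [hs.2], by linarith [hs.1]⟩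
  have hIoo : ∀ s ∈ Ioo a b, a + b - s ∈ Ioo a b := fun s hs =>
    ⟨by linarith [hs.2], by linarith [hs.1]⟩
  have key := abs_sub_le_of_abs_deriv_le_rpow_sub_left (f := fun s => f (a + b - s))
    (f' := fun s => -f' (a + b - s)) hab hα
    (hf.comp (continuousOn_const.sub continuousOn_id) hIcc)
    (fun s hs => ((hf' _ (hIoo s hs)).comp s ((hasDerivAt_id' s).const_sub (a + b))).congr_deriv
      (mul_neg_one _))
    (fun s hs => by
      rw [abs_neg, show s - a = b - (a + b - s) by ring]
      exact hbound _ (hIoo s hs))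
  simpa [abs_sub_comm] using key

end PowerLawBounds

theorem rpow_le_mul_rpow_of_le_mul {x y c e : ℝ} (hx : 0 ≤ x) (hc : 1 ≤ c) (hxy : x ≤ c * y)
    (he : 0 ≤ e) (he1 : e ≤ 1) : x ^ e ≤ c * y ^ e := by
  have hy : 0 ≤ y := nonneg_of_mul_nonneg_right (hx.trans hxy) (by linarith)
  calc x ^ e ≤ (c * y) ^ e := rpow_le_rpow hx hxy he
    _ = c ^ e * y ^ e := mul_rpow (by linarith) hy
    _ ≤ c * y ^ e := by
        gcongr
        simpa using rpow_le_rpow_of_exponent_le hc he1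

theorem rpow_le_mul_rpow_of_le_mul_of_nonpos {x y c e : ℝ} (hx : 0 < x) (hc : 1 ≤ c)
    (hxy : x ≤ c * y) (he : -1 ≤ e) (he0 : e ≤ 0) : y ^ e ≤ c * x ^ e := by
  have hc0 : 0 < c := by linarith
  calc y ^ e ≤ (x / c) ^ e :=
        rpow_le_rpow_of_nonpos (div_pos hx hc0) (by rwa [div_le_iff₀' hc0]) he0
    _ = c ^ (-e) * x ^ e := by
        rw [div_rpow hx.le hc0.le, rpow_neg hc0.le]; ring
    _ ≤ c * x ^ e := by
        gcongr
        simpa using rpow_le_rpow_of_exponent_le hc (show -e ≤ 1 by linarith)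

theorem abs_sub_one_le_sq_mul_abs_inv_sq_sub_one {x : ℝ} (hx : 0 < x) :
    |x - 1| ≤ x ^ 2 * |(x ^ 2)⁻¹ - 1| := by
  rw [show (x ^ 2)⁻¹ - 1 = (1 - x ^ 2) / x ^ 2 by field_simp, abs_div, abs_of_pos (pow_pos hx 2),
    mul_div_cancel₀ _ (pow_pos hx 2).ne', show 1 - x ^ 2 = (1 - x) * (1 + x) by ring, abs_mul,
    abs_sub_comm, abs_of_pos (show 0 < 1 + x by linarith)]
  nlinarith [abs_nonneg (1 - x)]

namespace Qset

variable {u v s : ℝ}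

theorem mem_of_snd_mem_Icc (hp : (u, v) ∈ Qset) (hs : s ∈ Icc u v) : (u, s) ∈ Qset :=
  ⟨hp.1, hs.1, hs.2.trans hp.2.2⟩

theorem mem_of_fst_mem_Icc (hp : (u, v) ∈ Qset) (hs : s ∈ Icc u v) : (s, v) ∈ Qset :=
  ⟨hp.1.trans hs.1, hs.2, hp.2.2⟩

theorem fst_mem_Icc (hp : (u, v) ∈ Qset) : u ∈ Icc (-2) 0 :=
  ⟨hp.1, hp.2.1.trans hp.2.2⟩

theorem snd_mem_Icc (hp : (u, v) ∈ Qset) : v ∈ Icc (-2) 0 :=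
  ⟨hp.1.trans hp.2.1, hp.2.2⟩

end Qset

theorem vrho_mk (u v : ℝ) : vrho (u, v) = (v - u) / 2 := rfl

theorem SmoothNearQ.contDiffAt {n : ℕ} {Ω r φ : ℝ → ℝ → ℝ} (h : SmoothNearQ n Ω r φ)
    {p : ℝ × ℝ} (hp : p ∈ Qset) :
    ContDiffAt ℝ n (uncurry Ω) p ∧ ContDiffAt ℝ n (uncurry r) p ∧
      ContDiffAt ℝ n (uncurry φ) p := by
  obtain ⟨V, hV, hQV, hΩ, hr, hφ⟩ := h
  have hVp := hV.mem_nhds (hQV hp)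
  exact ⟨hΩ.contDiffAt hVp, hr.contDiffAt hVp, hφ.contDiffAt hVp⟩

structure BootstrapAssumptions (δ κ L M C : ℝ) (g : ℝ → ℝ) (Ω r φ : ℝ → ℝ → ℝ) : Prop where
  delta_pos : 0 < δ
  delta_lt_half : δ < 1 / 2
  kappa_nonneg : 0 ≤ κ
  one_le_M : 1 ≤ M
  C_nonneg : 0 ≤ C
  contDiffAt_Ω : ∀ p ∈ Qset, ContDiffAt ℝ 2 (uncurry Ω) p
  contDiffAt_r : ∀ p ∈ Qset, ContDiffAt ℝ 2 (uncurry r) p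
  contDiffAt_φ : ∀ p ∈ Qset, ContDiffAt ℝ 2 (uncurry φ) p
  r_pos : ∀ p ∈ Qset, p.1 < p.2 → 0 < r p.1 p.2
  eqN2 : ∀ p ∈ Qset, p.1 < p.2 → EqN2 κ Ω r φ p.1 p.2
  eqN3 : ∀ p ∈ Qset, p.1 < p.2 → EqN3 κ g Ω r φ p.1 p.2
  axis : AxisNormalized Ω r φ
  abs_g_le : ∀ y, |g y| ≤ L * |y|
  Ω_mem : ∀ p ∈ Qset, M⁻¹ ≤ Ω p.1 p.2 ∧ Ω p.1 p.2 ≤ M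
  r_mem : ∀ p ∈ Qset, vrho p / M ≤ r p.1 p.2 ∧ r p.1 p.2 ≤ M * vrho p
  quarter_le_pdub_r : ∀ p ∈ Qset, 1 / 4 ≤ pdub r p.1 p.2
  abs_pdub_φ_le : ∀ p ∈ Qset, p.1 < p.2 → |pdub φ p.1 p.2| ≤ C * r p.1 p.2 ^ (δ - 1)

namespace BootstrapAssumptions

variable {δ κ L M C : ℝ} {g : ℝ → ℝ} {Ω r φ : ℝ → ℝ → ℝ}
  (H : BootstrapAssumptions δ κ L M C g Ω r φ) {u v : ℝ}
include H

theorem sub_le_two_mul_M_mul_r (hp : (u, v) ∈ Qset) : v - u ≤ 2 * M * r u v := by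
  have h := (H.r_mem (u, v) hp).1
  have hM : 0 < M := by linarith [H.one_le_M]
  rw [vrho, div_div, div_le_iff₀ (by positivity)] at h
  linarith

theorem r_le_M_sq_mul_r {s : ℝ} (hp : (u, v) ∈ Qset) (hs : s ∈ Icc u v) :
    r u s ≤ M ^ 2 * r u v := by
  have hM : 0 ≤ M := by linarith [H.one_le_M]
  calc r u s ≤ M * ((s - u) / 2) := (H.r_mem (u, s) (Qset.mem_of_snd_mem_Icc hp hs)).2
    _ ≤ M * (M * r u v) := by
        gcongr
        linarith [hs.2, H.sub_le_two_mul_M_mul_r hp]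
    _ = M ^ 2 * r u v := by ring

theorem abs_sub_le_of_hasDerivAt_snd {f f' : ℝ → ℝ} {α K : ℝ} (hp : (u, v) ∈ Qset)
    (huv : u < v) (hα : 0 < α) (hα1 : α ≤ 1) (hK : 0 ≤ K)
    (hf : ∀ s ∈ Icc u v, HasDerivAt f (f' s) s)
    (hbound : ∀ s ∈ Ioo u v, |f' s| ≤ K * r u s ^ (α - 1)) :
    |f v - f u| ≤ 4 * M ^ 2 * K / α * r u v ^ α := by
  have hM : 1 ≤ 2 * M := by linarith [H.one_le_M]
  have hbound' : ∀ s ∈ Ioo u v, |f' s| ≤ 2 * M * K * (s - u) ^ (α - 1) := fun s hs => by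
    have hq := Qset.mem_of_snd_mem_Icc hp (Ioo_subset_Icc_self hs)
    calc |f' s| ≤ K * r u s ^ (α - 1) := hbound s hs
      _ ≤ K * (2 * M * (s - u) ^ (α - 1)) := by
          gcongr
          exact rpow_le_mul_rpow_of_le_mul_of_nonpos (sub_pos.2 hs.1) hM
            (H.sub_le_two_mul_M_mul_r hq) (by linarith) (by linarith)
      _ = 2 * M * K * (s - u) ^ (α - 1) := by ring
  calc |f v - f u| ≤ 2 * M * K / α * (v - u) ^ α :=
        abs_sub_le_of_abs_deriv_le_rpow_sub_left huv hα
          (fun s hs => (hf s hs).continuousAt.continuousWithinAt)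
          (fun s hs => hf s (Ioo_subset_Icc_self hs)) hbound'
    _ ≤ 2 * M * K / α * (2 * M * r u v ^ α) := by
        gcongr
        exact rpow_le_mul_rpow_of_le_mul (sub_pos.2 huv).le hM
          (H.sub_le_two_mul_M_mul_r hp) hα.le hα1
    _ = 4 * M ^ 2 * K / α * r u v ^ α := by ring
theorem abs_sub_le_of_hasDerivAt_fst {f f' : ℝ → ℝ} {α K : ℝ} (hp : (u, v) ∈ Qset)
    (huv : u < v) (hα : 0 < α) (hα1 : α ≤ 1) (hK : 0 ≤ K)
    (hf : ∀ s ∈ Icc u v, HasDerivAt f (f' s) s)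
    (hbound : ∀ s ∈ Ioo u v, |f' s| ≤ K * r s v ^ (α - 1)) :
    |f v - f u| ≤ 4 * M ^ 2 * K / α * r u v ^ α := by
  have hM : 1 ≤ 2 * M := by linarith [H.one_le_M]
  have hbound' : ∀ s ∈ Ioo u v, |f' s| ≤ 2 * M * K * (v - s) ^ (α - 1) := fun s hs => by
    have hq := Qset.mem_of_fst_mem_Icc hp (Ioo_subset_Icc_self hs)
    calc |f' s| ≤ K * r s v ^ (α - 1) := hbound s hs
      _ ≤ K * (2 * M * (v - s) ^ (α - 1)) := by
          gcongr
          exact rpow_le_mul_rpow_of_le_mul_of_nonpos (sub_pos.2 hs.2) hM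
            (H.sub_le_two_mul_M_mul_r hq) (by linarith) (by linarith)
      _ = 2 * M * K * (v - s) ^ (α - 1) := by ring
  calc |f v - f u| ≤ 2 * M * K / α * (v - u) ^ α :=
        abs_sub_le_of_abs_deriv_le_rpow_sub_right huv hα
          (fun s hs => (hf s hs).continuousAt.continuousWithinAt)
          (fun s hs => hf s (Ioo_subset_Icc_self hs)) hbound'
    _ ≤ 2 * M * K / α * (2 * M * r u v ^ α) := by
        gcongr
        exact rpow_le_mul_rpow_of_le_mul (sub_pos.2 huv).le hM
          (H.sub_le_two_mul_M_mul_r hp) hα.le hα1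
    _ = 4 * M ^ 2 * K / α * r u v ^ α := by ring

theorem abs_φ_le (hp : (u, v) ∈ Qset) (huv : u < v) :
    |φ u v| ≤ 4 * M ^ 2 / δ * C * r u v ^ δ := by
  have h := H.abs_sub_le_of_hasDerivAt_snd hp huv H.delta_pos
    (by linarith [H.delta_lt_half]) H.C_nonneg
    (fun s hs => hasDerivAt_pdub ((H.contDiffAt_φ _ (Qset.mem_of_snd_mem_Icc hp hs)).of_le
      one_le_two))
    (fun s hs => H.abs_pdub_φ_le (u, s) (Qset.mem_of_snd_mem_Icc hp (Ioo_subset_Icc_self hs))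
      hs.1)
  rw [(H.axis u (Qset.fst_mem_Icc hp)).2.2.2.2, sub_zero] at h
  exact h.trans_eq (by ring)

theorem abs_pdu_pdub_r_le (hp : (u, v) ∈ Qset) (huv : u < v) :
    |pdu (pdub r) u v| ≤ 4 * κ * M ^ 6 * L ^ 2 / δ ^ 2 * C ^ 2 * r u v ^ (2 * δ - 1) := by
  have hr : 0 < r u v := H.r_pos (u, v) hp huv
  have hκ := H.kappa_nonneg
  obtain ⟨hΩ1, hΩM⟩ : M⁻¹ ≤ Ω u v ∧ Ω u v ≤ M := H.Ω_mem (u, v) hp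
  have hΩ0 : 0 ≤ Ω u v := (inv_nonneg.2 (by linarith [H.one_le_M])).trans hΩ1
  have hg : g (φ u v) ^ 2 ≤ L ^ 2 * (4 * M ^ 2 / δ * C * r u v ^ δ) ^ 2 := by
    calc g (φ u v) ^ 2 ≤ (L * |φ u v|) ^ 2 := by
          rw [← sq_abs]; exact pow_le_pow_left₀ (abs_nonneg _) (H.abs_g_le _) 2
      _ ≤ L ^ 2 * (4 * M ^ 2 / δ * C * r u v ^ δ) ^ 2 := by
          rw [mul_pow]
          gcongr
          exact H.abs_φ_le hp huv
  have hrpow : (r u v ^ δ) ^ 2 = r u v ^ (2 * δ - 1) * r u v := by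
    rw [← rpow_natCast, ← rpow_mul hr.le, ← rpow_add_one hr.ne']; norm_num; ring_nf
  rw [H.eqN3 (u, v) hp huv, abs_of_nonneg (by positivity),
    div_le_iff₀ (by positivity)]
  calc κ * Ω u v ^ 2 * g (φ u v) ^ 2
      ≤ κ * M ^ 2 * (L ^ 2 * (4 * M ^ 2 / δ * C * r u v ^ δ) ^ 2) := by
        gcongr
    _ = 4 * κ * M ^ 6 * L ^ 2 / δ ^ 2 * C ^ 2 * r u v ^ (2 * δ - 1) * (4 * r u v) := by
        rw [mul_pow, hrpow]; ring

theorem abs_pdub_r_sub_half_le (hp : (u, v) ∈ Qset) (huv : u < v) :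
    |pdub r u v - 1 / 2| ≤ 8 * κ * M ^ 8 * L ^ 2 / δ ^ 3 * C ^ 2 * r u v ^ (2 * δ) := by
  have hκ := H.kappa_nonneg
  have hδ := H.delta_pos
  have h := H.abs_sub_le_of_hasDerivAt_fst (f := fun s => pdub r s v) (α := 2 * δ)
    (K := 4 * κ * M ^ 6 * L ^ 2 / δ ^ 2 * C ^ 2) hp huv
    (by positivity) (by linarith [H.delta_lt_half]) (by positivity)
    (fun s hs => hasDerivAt_pdu
      (contDiffAt_uncurry_pdub (n := 1) (H.contDiffAt_r _ (Qset.mem_of_fst_mem_Icc hp hs))))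
    (fun s hs => H.abs_pdu_pdub_r_le (Qset.mem_of_fst_mem_Icc hp (Ioo_subset_Icc_self hs)) hs.2)
  rw [(H.axis v (Qset.snd_mem_Icc hp)).2.1, abs_sub_comm] at h
  exact h.trans_eq (by field_simp; ring)

theorem abs_pdu_r_add_half_le (hp : (u, v) ∈ Qset) (huv : u < v) :
    |pdu r u v + 1 / 2| ≤ 8 * κ * M ^ 8 * L ^ 2 / δ ^ 3 * C ^ 2 * r u v ^ (2 * δ) := by
  have hκ := H.kappa_nonneg
  have hδ := H.delta_pos
  have h := H.abs_sub_le_of_hasDerivAt_snd (f := pdu r u) (α := 2 * δ)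
    (K := 4 * κ * M ^ 6 * L ^ 2 / δ ^ 2 * C ^ 2) hp huv
    (by positivity) (by linarith [H.delta_lt_half]) (by positivity)
    (fun s hs => hasDerivAt_pdub
      (contDiffAt_uncurry_pdu (n := 1) (H.contDiffAt_r _ (Qset.mem_of_snd_mem_Icc hp hs))))
    (fun s hs => by
      have hq := Qset.mem_of_snd_mem_Icc hp (Ioo_subset_Icc_self hs)
      rw [pdub_pdu_eq_pdu_pdub (H.contDiffAt_r _ hq)]
      exact H.abs_pdu_pdub_r_le hq hs.1)
  rw [(H.axis u (Qset.fst_mem_Icc hp)).2.2.1, sub_neg_eq_add] at h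
  exact h.trans_eq (by field_simp; ring)

theorem abs_r_sub_vrho_le (hp : (u, v) ∈ Qset) (huv : u < v) :
    |r u v - vrho (u, v)| ≤
      16 * κ * M ^ 10 * L ^ 2 / δ ^ 3 * C ^ 2 * r u v ^ (2 * δ) * vrho (u, v) := by
  have hκ := H.kappa_nonneg
  have hδ := H.delta_pos
  have hr : 0 < r u v := H.r_pos (u, v) hp huv
  obtain ⟨c, hc, hslope⟩ := exists_hasDerivAt_eq_slope (fun s => r u s - s / 2)
    (fun s => pdub r u s - 1 / 2) huv
    (fun s hs => (hasDerivAt_pdub ((H.contDiffAt_r _ (Qset.mem_of_snd_mem_Icc hp hs)).of_le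
      one_le_two)).continuousAt.continuousWithinAt.sub (continuousWithinAt_id.div_const 2))
    (fun s hs => (hasDerivAt_pdub ((H.contDiffAt_r _ (Qset.mem_of_snd_mem_Icc hp
      (Ioo_subset_Icc_self hs))).of_le one_le_two)).sub ((hasDerivAt_id' s).div_const 2))
  have hcq := Qset.mem_of_snd_mem_Icc hp (Ioo_subset_Icc_self hc)
  have hrc : r u c ^ (2 * δ) ≤ M ^ 2 * r u v ^ (2 * δ) :=
    rpow_le_mul_rpow_of_le_mul (H.r_pos _ hcq hc.1).le (one_le_pow₀ H.one_le_M)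
      (H.r_le_M_sq_mul_r hp (Ioo_subset_Icc_self hc)) (by positivity)
      (by linarith [H.delta_lt_half])
  have hvrho : r u v - vrho (u, v) = (pdub r u c - 1 / 2) * (2 * vrho (u, v)) := by
    rw [hslope, (H.axis u (Qset.fst_mem_Icc hp)).1, vrho_mk]
    field_simp [(sub_pos.2 huv).ne']
    ring
  have hϱ : 0 ≤ 2 * vrho (u, v) := by rw [vrho_mk]; linarith
  rw [hvrho, abs_mul, abs_of_nonneg hϱ]
  calc |pdub r u c - 1 / 2| * (2 * vrho (u, v))
      ≤ 8 * κ * M ^ 8 * L ^ 2 / δ ^ 3 * C ^ 2 * (M ^ 2 * r u v ^ (2 * δ)) * (2 * vrho (u, v)) := by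
        gcongr
        exact (H.abs_pdub_r_sub_half_le hcq hc.1).trans (by gcongr)
    _ = 16 * κ * M ^ 10 * L ^ 2 / δ ^ 3 * C ^ 2 * r u v ^ (2 * δ) * vrho (u, v) := by ring

theorem abs_pdub_Ω_inv_sq_mul_pdub_r_le (hp : (u, v) ∈ Qset) (huv : u < v) :
    |pdub (fun u' v' => (Ω u' v' ^ 2)⁻¹ * pdub r u' v') u v| ≤
      κ * M ^ 2 * C ^ 2 * r u v ^ (2 * δ - 1) := by
  have hr : 0 < r u v := H.r_pos (u, v) hp huv
  have hκ := H.kappa_nonneg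
  have hM : 0 < M := by linarith [H.one_le_M]
  have hΩ : (Ω u v)⁻¹ ≤ M := inv_le_of_inv_le₀ hM (H.Ω_mem (u, v) hp).1
  have hΩ0 : 0 ≤ (Ω u v)⁻¹ := inv_nonneg.2 ((inv_pos.2 hM).le.trans (H.Ω_mem (u, v) hp).1)
  have hφ : pdub φ u v ^ 2 ≤ (C * r u v ^ (δ - 1)) ^ 2 := by
    rw [← sq_abs]; exact pow_le_pow_left₀ (abs_nonneg _) (H.abs_pdub_φ_le (u, v) hp huv) 2
  have hrpow : r u v * (r u v ^ (δ - 1)) ^ 2 = r u v ^ (2 * δ - 1) := by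
    have := H.delta_lt_half
    rw [← rpow_natCast, ← rpow_mul hr.le, ← rpow_one_add' hr.le (by norm_num; linarith)]
    norm_num; ring_nf
  rw [H.eqN2 (u, v) hp huv, abs_neg, abs_of_nonneg (by positivity), ← inv_pow]
  calc (Ω u v)⁻¹ ^ 2 * κ * r u v * pdub φ u v ^ 2
      ≤ M ^ 2 * κ * r u v * (C * r u v ^ (δ - 1)) ^ 2 := by
        gcongr
    _ = κ * M ^ 2 * C ^ 2 * r u v ^ (2 * δ - 1) := by rw [← hrpow]; ring

theorem abs_Ω_inv_sq_mul_pdub_r_sub_half_le (hp : (u, v) ∈ Qset) (huv : u < v) :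
    |(Ω u v ^ 2)⁻¹ * pdub r u v - 1 / 2| ≤ 2 * κ * M ^ 4 / δ * C ^ 2 * r u v ^ (2 * δ) := by
  have hκ := H.kappa_nonneg
  have hδ := H.delta_pos
  have hM : 0 < M := by linarith [H.one_le_M]
  have hderiv : ∀ s ∈ Icc u v, HasDerivAt (fun s => (Ω u s ^ 2)⁻¹ * pdub r u s)
      (pdub (fun u' v' => (Ω u' v' ^ 2)⁻¹ * pdub r u' v') u s) s := fun s hs => by
    have hq := Qset.mem_of_snd_mem_Icc hp hs
    have hΩ : 0 < Ω u s := (inv_pos.2 hM).trans_le (H.Ω_mem _ hq).1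
    exact ((((hasDerivAt_pdub ((H.contDiffAt_Ω _ hq).of_le one_le_two)).differentiableAt.pow
      2).inv (pow_ne_zero 2 hΩ.ne')).mul (hasDerivAt_pdub
      (contDiffAt_uncurry_pdub (n := 1) (H.contDiffAt_r _ hq))).differentiableAt).hasDerivAt
  have h := H.abs_sub_le_of_hasDerivAt_snd (α := 2 * δ) (K := κ * M ^ 2 * C ^ 2) hp huv
    (by positivity) (by linarith [H.delta_lt_half]) (by positivity) hderiv
    (fun s hs => H.abs_pdub_Ω_inv_sq_mul_pdub_r_le
      (Qset.mem_of_snd_mem_Icc hp (Ioo_subset_Icc_self hs)) hs.1)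
  obtain ⟨-, hr, -, hΩ, -⟩ := H.axis u (Qset.fst_mem_Icc hp)
  rw [hΩ, hr, one_pow, inv_one, one_mul] at h
  exact h.trans_eq (by field_simp; ring)

theorem abs_Ω_sub_one_le (hp : (u, v) ∈ Qset) (huv : u < v) :
    |Ω u v - 1| ≤
      (8 * κ * M ^ 6 / δ + 32 * κ * M ^ 10 * L ^ 2 / δ ^ 3) * C ^ 2 * r u v ^ (2 * δ) := by
  have hM : 0 < M := by linarith [H.one_le_M]
  obtain ⟨hΩ1, hΩM⟩ : M⁻¹ ≤ Ω u v ∧ Ω u v ≤ M := H.Ω_mem (u, v) hp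
  have hΩ : 0 < Ω u v := (inv_pos.2 hM).trans_le hΩ1
  have hX : 1 / 4 ≤ pdub r u v := H.quarter_le_pdub_r (u, v) hp
  have hflux := H.abs_Ω_inv_sq_mul_pdub_r_sub_half_le hp huv
  have hpdub := H.abs_pdub_r_sub_half_le hp huv
  set a := (Ω u v ^ 2)⁻¹
  have ha : |a - 1| * pdub r u v ≤
      (2 * κ * M ^ 4 / δ + 8 * κ * M ^ 8 * L ^ 2 / δ ^ 3) * C ^ 2 * r u v ^ (2 * δ) := by
    rw [← abs_of_pos (show 0 < pdub r u v by linarith), ← abs_mul,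
      show (a - 1) * pdub r u v = (a * pdub r u v - 1 / 2) - (pdub r u v - 1 / 2) by ring]
    exact (abs_sub _ _).trans (by linarith)
  calc |Ω u v - 1| ≤ Ω u v ^ 2 * |a - 1| := abs_sub_one_le_sq_mul_abs_inv_sq_sub_one hΩ
    _ ≤ M ^ 2 * (4 * ((2 * κ * M ^ 4 / δ + 8 * κ * M ^ 8 * L ^ 2 / δ ^ 3) * C ^ 2 *
          r u v ^ (2 * δ))) := by
        gcongr
        nlinarith [abs_nonneg (a - 1)]
    _ = (8 * κ * M ^ 6 / δ + 32 * κ * M ^ 10 * L ^ 2 / δ ^ 3) * C ^ 2 * r u v ^ (2 * δ) := by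
        ring

end BootstrapAssumptions

theorem bootstrap_consequences_general
    (δ κ L M : ℝ) (hδ0 : 0 < δ) (hδ : δ < 1 / 2) (hκ : 0 < κ) (hM : 1 ≤ M) :
    ∃ C' > (0:ℝ),
      ∀ (C : ℝ) (g : ℝ → ℝ) (Ω r φ : ℝ → ℝ → ℝ),
        0 ≤ C →
        ContDiff ℝ 1 g →
        SmoothNearQ 2 Ω r φ →
        (∀ p ∈ Qset, p.1 < p.2 → 0 < r p.1 p.2) →
        (∀ p ∈ Qset, p.1 < p.2 → EqN1 κ Ω r φ p.1 p.2) →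
        (∀ p ∈ Qset, p.1 < p.2 → EqN2 κ Ω r φ p.1 p.2) →
        (∀ p ∈ Qset, p.1 < p.2 → EqN3 κ g Ω r φ p.1 p.2) →
        AxisNormalized Ω r φ →
        (∀ y : ℝ, |g y| ≤ L * |y|) →
        (∀ p ∈ Qset, M⁻¹ ≤ Ω p.1 p.2 ∧ Ω p.1 p.2 ≤ M) →
        (∀ p ∈ Qset, vrho p / M ≤ r p.1 p.2 ∧ r p.1 p.2 ≤ M * vrho p) →
        (∀ p ∈ Qset, 1 / 4 ≤ pdub r p.1 p.2 ∧ pdub r p.1 p.2 ≤ M) →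
        (∀ p ∈ Qset, p.1 < p.2 → |pdub φ p.1 p.2| ≤ C * r p.1 p.2 ^ (δ - 1)) →
        ∀ p ∈ Qset, p.1 < p.2 →
          |φ p.1 p.2| ≤ C' * C * r p.1 p.2 ^ δ ∧
          |pdu r p.1 p.2 + 1 / 2| ≤ C' * C ^ 2 * r p.1 p.2 ^ (2 * δ) ∧
          |pdub r p.1 p.2 - 1 / 2| ≤ C' * C ^ 2 * r p.1 p.2 ^ (2 * δ) ∧
          |r p.1 p.2 - vrho p| ≤ C' * C ^ 2 * r p.1 p.2 ^ (2 * δ) * vrho p ∧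
          |Ω p.1 p.2 - 1| ≤ C' * C ^ 2 * r p.1 p.2 ^ (2 * δ) := by
  have hA : 0 < 4 * M ^ 2 / δ := by positivity
  have hB₂ : 0 ≤ 8 * κ * M ^ 8 * L ^ 2 / δ ^ 3 := by positivity
  have hB₃ : 0 ≤ 16 * κ * M ^ 10 * L ^ 2 / δ ^ 3 := by positivity
  have hB₅ : 0 ≤ 8 * κ * M ^ 6 / δ + 32 * κ * M ^ 10 * L ^ 2 / δ ^ 3 := by positivity
  refine ⟨4 * M ^ 2 / δ + 8 * κ * M ^ 8 * L ^ 2 / δ ^ 3 + 16 * κ * M ^ 10 * L ^ 2 / δ ^ 3 +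
    (8 * κ * M ^ 6 / δ + 32 * κ * M ^ 10 * L ^ 2 / δ ^ 3), by positivity, ?_⟩
  rintro C g Ω r φ hC - hsmooth hr - hN2 hN3 haxis hg hΩ hrϱ hpdub hboot ⟨u, v⟩ hp huv
  have H : BootstrapAssumptions δ κ L M C g Ω r φ :=
    ⟨hδ0, hδ, hκ.le, hM, hC, fun p hp => (hsmooth.contDiffAt hp).1,
      fun p hp => (hsmooth.contDiffAt hp).2.1, fun p hp => (hsmooth.contDiffAt hp).2.2, hr, hN2,
      hN3, haxis, hg, hΩ, hrϱ, fun p hp => (hpdub p hp).1, hboot⟩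
  have hrδ : 0 ≤ r u v ^ δ := rpow_nonneg (hr _ hp huv).le _
  have hr2δ : 0 ≤ r u v ^ (2 * δ) := rpow_nonneg (hr _ hp huv).le _
  have hϱ : 0 ≤ vrho (u, v) := by rw [vrho_mk]; linarith
  exact ⟨(H.abs_φ_le hp huv).trans (by gcongr ?_ * _ * _; linarith),
    (H.abs_pdu_r_add_half_le hp huv).trans (by gcongr ?_ * _ * _; linarith),
    (H.abs_pdub_r_sub_half_le hp huv).trans (by gcongr ?_ * _ * _; linarith),
    (H.abs_r_sub_vrho_le hp huv).trans (by gcongr ?_ * _ * _ * _; linarith),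
    (H.abs_Ω_sub_one_le hp huv).trans (by gcongr ?_ * _ * _; linarith)⟩

/-- Consequences of the bootstrap assumption `|∂_ū φ| ≤ C r^{δ−1}`: there is a constant
`C′ > 0` depending only on `δ, κ, L, M` such that on `Q∖Γ` one has `|φ| ≤ C′C r^δ`,
`|∂_u r + 1/2| ≤ C′C² r^{2δ}`, `|∂_ū r − 1/2| ≤ C′C² r^{2δ}`, `|r − ϱ| ≤ C′C² r^{2δ} ϱ`
and `|Ω − 1| ≤ C′C² r^{2δ}`. -/
theorem bootstrap_consequences
    (δ κ L M : ℝ) (hδ0 : 0 < δ) (hδ : δ < 1 / 2) (hκ : 0 < κ) (hL : 0 < L) (hM : 1 ≤ M) :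
    ∃ C' > (0:ℝ),
      ∀ (C : ℝ) (g : ℝ → ℝ) (Ω r φ : ℝ → ℝ → ℝ),
        0 ≤ C →
        ContDiff ℝ 1 g →
        SmoothNearQ 2 Ω r φ →
        (∀ p ∈ Qset, p.1 < p.2 → 0 < r p.1 p.2) →
        (∀ p ∈ Qset, p.1 < p.2 → EqN1 κ Ω r φ p.1 p.2) →
        (∀ p ∈ Qset, p.1 < p.2 → EqN2 κ Ω r φ p.1 p.2) →
        (∀ p ∈ Qset, p.1 < p.2 → EqN3 κ g Ω r φ p.1 p.2) →
        AxisNormalized Ω r φ →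
        (∀ y : ℝ, |g y| ≤ L * |y|) →
        (∀ p ∈ Qset, M⁻¹ ≤ Ω p.1 p.2 ∧ Ω p.1 p.2 ≤ M) →
        (∀ p ∈ Qset, vrho p / M ≤ r p.1 p.2 ∧ r p.1 p.2 ≤ M * vrho p) →
        (∀ p ∈ Qset, 1 / 4 ≤ pdub r p.1 p.2 ∧ pdub r p.1 p.2 ≤ M) →
        (∀ p ∈ Qset, p.1 < p.2 → |pdub φ p.1 p.2| ≤ C * r p.1 p.2 ^ (δ - 1)) →
        ∀ p ∈ Qset, p.1 < p.2 →
          |φ p.1 p.2| ≤ C' * C * r p.1 p.2 ^ δ ∧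
          |pdu r p.1 p.2 + 1 / 2| ≤ C' * C ^ 2 * r p.1 p.2 ^ (2 * δ) ∧
          |pdub r p.1 p.2 - 1 / 2| ≤ C' * C ^ 2 * r p.1 p.2 ^ (2 * δ) ∧
          |r p.1 p.2 - vrho p| ≤ C' * C ^ 2 * r p.1 p.2 ^ (2 * δ) * vrho p ∧
          |Ω p.1 p.2 - 1| ≤ C' * C ^ 2 * r p.1 p.2 ^ (2 * δ) :=
  bootstrap_consequences_general δ κ L M hδ0 hδ hκ hM
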